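/- (Lemma 2, one-dimensional form) Let X be a real random variable with finite fourth moment and variance σ²(X) > 0, and let N be independent of X with Gaussian law N(0, σ²), σ > 0. Set Y = X + N. Then σ²(Y) = σ²(X) + σ², and the excess kurtosis of Y satisfies κ(Y) = κ(X) · (σ²(X)/σ²(Y))² = κ(X) · (1 − σ²/σ²(Y))² = κ(X) · (1 − 1/SNR(Y))², where the signal-to-noise ratio is defined as SNR(Y) = σ²(Y)/σ². -/

import Mathlib

open MeasureTheory ProbabilityTheory

noncomputable def kurtRV {Ω : Type*} [MeasurableSpace Ω] (X : Ω → ℝ) (P : Measure Ω) : ℝ :=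
  centralMoment X 4 P / (variance X P) ^ 2 - 3

/-!
The fourth cumulant `μ₄ − 3σ⁴ = κ σ⁴` is additive over independent summands: in the binomial
expansion of the fourth power of the centred sum, the expectations factor and the terms with a
first central moment vanish, leaving `μ₄(X) + 6 σ²(X) σ²(N) + μ₄(N)`. It vanishes for a Gaussian,
whose fourth moment `3 v²` is the fourth derivative at `0` of its moment generating function
`exp (v t² / 2)`. So `Y = X + N` has the fourth cumulant of `X` and the variance
`σ²(X) + σ²`, whence `κ(Y) = κ(X) (σ²(X) / σ²(Y))²`.
-/

open Real Finset
open scoped NNReal ENNReal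

lemma hasDerivAt_mul_exp_mul_sq_div_two (a : ℝ) {p : ℝ → ℝ} {p' t : ℝ}
    (hp : HasDerivAt p p' t) :
    HasDerivAt (fun t => p t * rexp (a * t ^ 2 / 2))
      ((p' + a * t * p t) * rexp (a * t ^ 2 / 2)) t := by
  have hq : HasDerivAt (fun t => a * t ^ 2 / 2) (a * t) t :=
    (((hasDerivAt_pow 2 t).const_mul a).div_const 2).congr_deriv (by ring)
  exact (hp.mul hq.exp).congr_deriv (by ring)

lemma iteratedDeriv_four_exp_mul_sq_div_two (a : ℝ) :
    iteratedDeriv 4 (fun t => rexp (a * t ^ 2 / 2)) 0 = 3 * a ^ 2 := by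
  set e := fun t => rexp (a * t ^ 2 / 2)
  have d1 : deriv e = fun t => a * t * e t := funext fun t => by
    simpa using (hasDerivAt_mul_exp_mul_sq_div_two a (hasDerivAt_const t 1)).deriv
  have d2 : deriv (fun t => a * t * e t) = fun t => (a + a ^ 2 * t ^ 2) * e t :=
    funext fun t => ((hasDerivAt_mul_exp_mul_sq_div_two a
      ((hasDerivAt_id' t).const_mul a)).congr_deriv (by ring)).deriv
  have d3 : deriv (fun t => (a + a ^ 2 * t ^ 2) * e t)
      = fun t => (3 * a ^ 2 * t + a ^ 3 * t ^ 3) * e t :=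
    funext fun t => ((hasDerivAt_mul_exp_mul_sq_div_two a
      (((hasDerivAt_pow 2 t).const_mul (a ^ 2)).const_add a)).congr_deriv (by ring)).deriv
  have d4 : deriv (fun t => (3 * a ^ 2 * t + a ^ 3 * t ^ 3) * e t) 0 = 3 * a ^ 2 :=
    ((hasDerivAt_mul_exp_mul_sq_div_two a (((hasDerivAt_id' 0).const_mul (3 * a ^ 2)).add
      ((hasDerivAt_pow 3 0).const_mul (a ^ 3)))).congr_deriv (by simp)).deriv
  rw [iteratedDeriv_succ, iteratedDeriv_succ, iteratedDeriv_succ, iteratedDeriv_one,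
    d1, d2, d3, d4]

lemma MeasureTheory.MemLp.integrable_pow_of_le {Ω : Type*} [MeasurableSpace Ω] {P : Measure Ω}
    [IsFiniteMeasure P] {X : Ω → ℝ} {n k : ℕ} (hX : MemLp X n P) (hk : k ≤ n) :
    Integrable (fun ω => X ω ^ k) P := by
  refine (integrable_norm_iff (f := fun ω => X ω ^ k) (hX.1.pow k)).mp ?_
  simpa only [norm_pow] using integrable_norm_pow_of_le hX.1 hk hX.integrable_norm_pow'

namespace ProbabilityTheory

lemma integral_pow_four_gaussianReal (v : ℝ≥0) :
    ∫ x, x ^ 4 ∂gaussianReal 0 v = 3 * (v : ℝ) ^ 2 := by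
  have h := iteratedDeriv_mgf_zero (X := fun x : ℝ => x) (μ := gaussianReal 0 v) (by simp) 4
  simp only [mgf_fun_id_gaussianReal, zero_mul, zero_add,
    iteratedDeriv_four_exp_mul_sq_div_two] at h
  exact h.symm

lemma centralMoment_four_id_gaussianReal (μ : ℝ) (v : ℝ≥0) :
    centralMoment id 4 (gaussianReal μ v) = 3 * (v : ℝ) ^ 2 := by
  calc centralMoment id 4 (gaussianReal μ v)
  _ = ∫ x, (x - μ) ^ 4 ∂gaussianReal μ v := by simp [centralMoment]
  _ = ∫ x, x ^ 4 ∂(gaussianReal μ v).map (fun x => x - μ) := by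
    rw [integral_map (by fun_prop) (by fun_prop)]
  _ = 3 * (v : ℝ) ^ 2 := by
    rw [gaussianReal_map_sub_const, sub_self, integral_pow_four_gaussianReal]

variable {Ω : Type*} [MeasurableSpace Ω] {P : Measure Ω} {X Y : Ω → ℝ} {n : ℕ}

lemma IndepFun.integral_add_pow [IsFiniteMeasure P] (hXY : IndepFun X Y P)
    (hX : MemLp X n P) (hY : MemLp Y n P) :
    ∫ ω, (X ω + Y ω) ^ n ∂P
      = ∑ k ∈ range (n + 1), (∫ ω, X ω ^ k ∂P) * (∫ ω, Y ω ^ (n - k) ∂P) * n.choose k := by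
  have hpow : ∀ k ∈ range (n + 1), IndepFun (fun ω => X ω ^ k) (fun ω => Y ω ^ (n - k)) P :=
    fun k _ => hXY.comp (measurable_id.pow_const k) (measurable_id.pow_const (n - k))
  have hXk : ∀ k ∈ range (n + 1), Integrable (fun ω => X ω ^ k) P :=
    fun k hk => hX.integrable_pow_of_le (Nat.lt_succ_iff.mp (mem_range.mp hk))
  have hYk : ∀ k, Integrable (fun ω => Y ω ^ (n - k)) P :=
    fun k => hY.integrable_pow_of_le (Nat.sub_le n k)
  simp_rw [add_pow]
  rw [integral_finsetSum]
  · refine sum_congr rfl fun k hk => ?_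
    rw [integral_mul_const, (hpow k hk).integral_fun_mul_eq_mul_integral (hXk k hk).1 (hYk k).1]
  · exact fun k hk => ((hpow k hk).integrable_mul (hXk k hk) (hYk k)).mul_const _

lemma IndepFun.centralMoment_add [IsProbabilityMeasure P] (hXY : IndepFun X Y P)
    (hX : MemLp X n P) (hY : MemLp Y n P) :
    centralMoment (X + Y) n P
      = ∑ k ∈ range (n + 1), centralMoment X k P * centralMoment Y (n - k) P * n.choose k := by
  rcases n.eq_zero_or_pos with rfl | hn
  · simp [centralMoment]
  have hn' : (1 : ℝ≥0∞) ≤ n := by exact_mod_cast hn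
  have hcenter : (X + Y) - (fun _ => P[X + Y]) = fun ω => (X ω - P[X]) + (Y ω - P[Y]) := by
    funext ω
    simp only [Pi.sub_apply, Pi.add_apply, integral_add (hX.integrable hn') (hY.integrable hn')]
    ring
  rw [centralMoment, hcenter]
  exact (hXY.comp (measurable_id.sub_const _) (measurable_id.sub_const _)).integral_add_pow
    (hX.sub (memLp_const _)) (hY.sub (memLp_const _))

lemma IndepFun.centralMoment_four_add [IsProbabilityMeasure P] (hXY : IndepFun X Y P)
    (hX : MemLp X 4 P) (hY : MemLp Y 4 P) :
    centralMoment (X + Y) 4 P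
      = centralMoment X 4 P + 6 * variance X P * variance Y P + centralMoment Y 4 P := by
  have hzero : ∀ Z : Ω → ℝ, centralMoment Z 0 P = 1 := fun Z => by simp [centralMoment]
  rw [hXY.centralMoment_add hX hY, ← centralMoment_two_eq_variance hX.1.aemeasurable,
    ← centralMoment_two_eq_variance hY.1.aemeasurable]
  simp only [sum_range_succ, sum_range_zero, hzero, centralMoment_one]
  norm_num [Nat.choose]
  ring

noncomputable def fourthCumulant (X : Ω → ℝ) (P : Measure Ω) : ℝ :=
  centralMoment X 4 P - 3 * variance X P ^ 2

lemma IndepFun.fourthCumulant_add [IsProbabilityMeasure P] (hXY : IndepFun X Y P)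
    (hX : MemLp X 4 P) (hY : MemLp Y 4 P) :
    fourthCumulant (X + Y) P = fourthCumulant X P + fourthCumulant Y P := by
  have hX2 : MemLp X 2 P := hX.mono_exponent (by norm_num)
  have hY2 : MemLp Y 2 P := hY.mono_exponent (by norm_num)
  simp only [fourthCumulant, hXY.centralMoment_four_add hX hY, hXY.variance_add hX2 hY2]
  ring

lemma HasLaw.centralMoment_eq {μ : Measure ℝ} (hX : HasLaw X μ P) (p : ℕ) :
    centralMoment X p P = centralMoment id p μ := by
  simp only [centralMoment, hX.integral_eq]
  exact hX.integral_comp (f := fun x => (x - ∫ x, x ∂μ) ^ p) (by fun_prop)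

lemma HasLaw.fourthCumulant_eq {μ : Measure ℝ} (hX : HasLaw X μ P) :
    fourthCumulant X P = fourthCumulant id μ := by
  rw [fourthCumulant, fourthCumulant, hX.centralMoment_eq, hX.variance_eq]

lemma fourthCumulant_id_gaussianReal (μ : ℝ) (v : ℝ≥0) :
    fourthCumulant id (gaussianReal μ v) = 0 := by
  rw [fourthCumulant, centralMoment_four_id_gaussianReal, variance_id_gaussianReal]
  ring

end ProbabilityTheory

lemma kurtRV_eq_fourthCumulant_div {Ω : Type*} [MeasurableSpace Ω] {P : Measure Ω}
    {X : Ω → ℝ} (hX : variance X P ≠ 0) :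
    kurtRV X P = fourthCumulant X P / variance X P ^ 2 := by
  rw [kurtRV, fourthCumulant]
  field_simp

theorem kurtosis_of_gaussian_noisy_observation_general
    {Ω : Type*} [MeasurableSpace Ω] (P : Measure Ω) [IsProbabilityMeasure P]
    (X N : Ω → ℝ) (hX4 : MemLp X 4 P) (hN : Measurable N)
    (σ : ℝ)
    (hmap : P.map N = (gaussianReal 0 (σ ^ 2).toNNReal : Measure ℝ))
    (hindep : IndepFun X N P)
    (hvar : 0 < variance X P) :
    variance (X + N) P = variance X P + σ ^ 2 ∧
    kurtRV (X + N) P = kurtRV X P * (variance X P / variance (X + N) P) ^ 2 ∧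
    kurtRV (X + N) P = kurtRV X P * (1 - σ ^ 2 / variance (X + N) P) ^ 2 ∧
    kurtRV (X + N) P = kurtRV X P * (1 - 1 / (variance (X + N) P / σ ^ 2)) ^ 2 := by
  have hNlaw : HasLaw N (gaussianReal 0 (σ ^ 2).toNNReal) P := ⟨hN.aemeasurable, hmap⟩
  have hN4 : MemLp N 4 P := (memLp_id_gaussianReal 4).comp_measurePreserving ⟨hN, hmap⟩
  have hvarY : variance (X + N) P = variance X P + σ ^ 2 := by
    rw [hindep.variance_add (hX4.mono_exponent (by norm_num)) (hN4.mono_exponent (by norm_num)),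
      hNlaw.variance_eq, variance_id_gaussianReal, Real.coe_toNNReal _ (sq_nonneg σ)]
  have hvarY_pos : 0 < variance (X + N) P := by rw [hvarY]; positivity
  have hcumY : fourthCumulant (X + N) P = fourthCumulant X P := by
    rw [hindep.fourthCumulant_add hX4 hN4, hNlaw.fourthCumulant_eq,
      fourthCumulant_id_gaussianReal, add_zero]
  have hkurt : kurtRV (X + N) P = kurtRV X P * (variance X P / variance (X + N) P) ^ 2 := by
    rw [kurtRV_eq_fourthCumulant_div hvarY_pos.ne', kurtRV_eq_fourthCumulant_div hvar.ne', hcumY]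
    field_simp
  have hratio : variance X P / variance (X + N) P = 1 - σ ^ 2 / variance (X + N) P := by
    rw [eq_sub_iff_add_eq, ← add_div, ← hvarY, div_self hvarY_pos.ne']
  refine ⟨hvarY, hkurt, hratio ▸ hkurt, ?_⟩
  rw [one_div_div, ← hratio, hkurt]

/-- Lemma 2 (one-dimensional form): if `X` has finite fourth moment and positive variance,
and `N` is independent of `X` with law `N(0, σ²)`, `σ > 0`, then `Y = X + N` satisfies
`σ²(Y) = σ²(X) + σ²` and
`κ(Y) = κ(X)·(σ²(X)/σ²(Y))² = κ(X)·(1 − σ²/σ²(Y))² = κ(X)·(1 − 1/SNR(Y))²`,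
where `SNR(Y) = σ²(Y)/σ²`. -/
theorem kurtosis_of_gaussian_noisy_observation
    {Ω : Type*} [MeasurableSpace Ω] (P : Measure Ω) [IsProbabilityMeasure P]
    (X N : Ω → ℝ) (hX4 : MemLp X 4 P) (hN : Measurable N)
    (σ : ℝ) (hσ : 0 < σ)
    (hmap : P.map N = (gaussianReal 0 (σ ^ 2).toNNReal : Measure ℝ))
    (hindep : IndepFun X N P)
    (hvar : 0 < variance X P) :
    variance (X + N) P = variance X P + σ ^ 2 ∧
    kurtRV (X + N) P = kurtRV X P * (variance X P / variance (X + N) P) ^ 2 ∧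
    kurtRV (X + N) P = kurtRV X P * (1 - σ ^ 2 / variance (X + N) P) ^ 2 ∧
    kurtRV (X + N) P = kurtRV X P * (1 - 1 / (variance (X + N) P / σ ^ 2)) ^ 2 :=
  kurtosis_of_gaussian_noisy_observation_general P X N hX4 hN σ hmap hindep hvar
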